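/- arXiv:math/0601448 — 8 statements merged into one kernel-verified Lean document; each statement's English description precedes it below -/
import Mathlib

section
/- Let Σ be a nonzero n×n positive semidefinite matrix, ρ > 0, and define φ(ρ) = max{x^T Σ x − ρ·Card(x) : ‖x‖₂ = 1} and φ̄(ρ) = max{x^T Σ x − ρ·Card(x) : ‖x‖₂ ≤ 1}, where Card(x) is the number of nonzero entries of x. If ρ < max_i Σ_ii, then φ(ρ) = φ̄(ρ) > 0. -/
open Matrix
open scoped BigOperators

/-- Number of nonzero entries of a vector. -/
noncomputable def card {n : ℕ} (x : Fin n → ℝ) : ℕ := Set.ncard {i | x i ≠ 0}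

lemma card_smul {n : ℕ} (c : ℝ) (hc : c ≠ 0) (x : Fin n → ℝ) :
    card (fun i => c * x i) = card x := by
  unfold card
  congr 1
  ext i
  simp [hc]

/-- for a nonzero PSD matrix `Σ` and `0 < ρ < max_i Σ_ii`,
`φ(ρ) = φ̄(ρ) > 0`, where `φ` maximizes over the unit sphere and `φ̄` over the unit ball. -/
theorem stmt1 {n : ℕ} (S : Matrix (Fin n) (Fin n) ℝ) (hS : S.PosSemidef) (hS0 : S ≠ 0)
    (ρ : ℝ) (hρ : 0 < ρ) (hρmax : ∃ i, ρ < S i i) :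
    sSup {v | ∃ x : Fin n → ℝ, (∑ i, x i ^ 2) = 1 ∧
        v = x ⬝ᵥ S.mulVec x - ρ * (card x : ℝ)} =
      sSup {v | ∃ x : Fin n → ℝ, (∑ i, x i ^ 2) ≤ 1 ∧
        v = x ⬝ᵥ S.mulVec x - ρ * (card x : ℝ)} ∧
    0 < sSup {v | ∃ x : Fin n → ℝ, (∑ i, x i ^ 2) = 1 ∧
        v = x ⬝ᵥ S.mulVec x - ρ * (card x : ℝ)} := by
  set A := {v | ∃ x : Fin n → ℝ, (∑ i, x i ^ 2) = 1 ∧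
      v = x ⬝ᵥ S.mulVec x - ρ * (card x : ℝ)} with hAdef
  set B := {v | ∃ x : Fin n → ℝ, (∑ i, x i ^ 2) ≤ 1 ∧
      v = x ⬝ᵥ S.mulVec x - ρ * (card x : ℝ)} with hBdef
  obtain ⟨i₀, hi₀⟩ := hρmax
  set C : ℝ := ∑ i, ∑ j, |S i j| with hC
  -- quadratic form bound on the ball
  have habs : ∀ x : Fin n → ℝ, (∑ i, x i ^ 2) ≤ 1 → ∀ i, |x i| ≤ 1 := by
    intro x hx i
    have h1 : x i ^ 2 ≤ 1 :=
      le_trans (Finset.single_le_sum (fun j _ => sq_nonneg (x j)) (Finset.mem_univ i)) hx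
    nlinarith [abs_nonneg (x i), sq_abs (x i)]
  have hq : ∀ x : Fin n → ℝ, x ⬝ᵥ S.mulVec x = ∑ i, ∑ j, x i * (S i j * x j) := by
    intro x
    simp [dotProduct, Matrix.mulVec, Finset.mul_sum]
  have hbound : ∀ x : Fin n → ℝ, (∑ i, x i ^ 2) ≤ 1 → x ⬝ᵥ S.mulVec x ≤ C := by
    intro x hx
    rw [hq x]
    apply Finset.sum_le_sum; intro i _
    apply Finset.sum_le_sum; intro j _
    calc x i * (S i j * x j) ≤ |x i * (S i j * x j)| := le_abs_self _
      _ = |x i| * |S i j| * |x j| := by rw [abs_mul, abs_mul]; ring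
      _ ≤ |S i j| := by
          have h1 := habs x hx i; have h2 := habs x hx j
          have h3 := abs_nonneg (x i); have h4 := abs_nonneg (x j)
          have h5 := abs_nonneg (S i j)
          have h6 : |x i| * |x j| ≤ 1 := by nlinarith
          nlinarith [mul_le_mul_of_nonneg_left h6 h5]
  have hBbdd : BddAbove B := by
    refine ⟨C, fun v hv => ?_⟩
    obtain ⟨x, hx, rfl⟩ := hv
    have h1 := hbound x hx
    have h2 : (0:ℝ) ≤ ρ * (card x : ℝ) := by positivity
    linarith
  have hABsub : A ⊆ B := by
    rintro v ⟨x, hx, rfl⟩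
    exact ⟨x, le_of_eq hx, rfl⟩
  have hAbdd : BddAbove A := hBbdd.mono hABsub
  -- the single vector e_{i₀}
  set e : Fin n → ℝ := Pi.single i₀ 1 with he
  have he_sum : (∑ i, e i ^ 2) = 1 := by
    simp [he, Pi.single_apply, ite_pow]
  have he_card : (card e : ℝ) = 1 := by
    have : {i | e i ≠ 0} = {i₀} := by
      ext j; simp [he, Pi.single_apply]
    simp [card, this]
  have he_quad : e ⬝ᵥ S.mulVec e = S i₀ i₀ := by
    rw [hq e]
    simp [he, Pi.single_apply]
  have heA : S i₀ i₀ - ρ ∈ A := by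
    refine ⟨e, he_sum, ?_⟩
    rw [he_quad, he_card]
    ring
  have hAne : A.Nonempty := ⟨_, heA⟩
  have hpos : 0 < sSup A := by
    have := le_csSup hAbdd heA
    linarith
  constructor
  · apply le_antisymm
    · exact csSup_le_csSup hBbdd hAne hABsub
    · apply csSup_le ⟨_, hABsub heA⟩
      rintro v ⟨x, hx, rfl⟩
      by_cases hx0 : x = 0
      · subst hx0
        have hc : card (0 : Fin n → ℝ) = 0 := by
          simp [card]
        rw [hc]
        simp only [Nat.cast_zero, mul_zero]
        have : (0:Fin n → ℝ) ⬝ᵥ S.mulVec 0 = 0 := by simp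
        rw [this]
        linarith
      · -- scale up to the sphere
        have hsum_pos : 0 < ∑ i, x i ^ 2 := by
          rcases Function.ne_iff.mp hx0 with ⟨j, hj⟩
          have : 0 < x j ^ 2 := pow_two_pos_of_ne_zero hj
          exact lt_of_lt_of_le this
            (Finset.single_le_sum (fun k _ => sq_nonneg (x k)) (Finset.mem_univ j))
        set t : ℝ := Real.sqrt (∑ i, x i ^ 2) with ht
        have ht_pos : 0 < t := Real.sqrt_pos.mpr hsum_pos
        have ht_sq : t ^ 2 = ∑ i, x i ^ 2 := Real.sq_sqrt hsum_pos.le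
        have ht_le : t ≤ 1 := by
          rw [ht]
          calc Real.sqrt (∑ i, x i ^ 2) ≤ Real.sqrt 1 := Real.sqrt_le_sqrt hx
            _ = 1 := Real.sqrt_one
        set y : Fin n → ℝ := fun i => t⁻¹ * x i with hy
        have hy_sum : (∑ i, y i ^ 2) = 1 := by
          simp only [hy, mul_pow]
          rw [← Finset.mul_sum, ← ht_sq]
          field_simp
        have hy_card : card y = card x := card_smul _ (inv_ne_zero ht_pos.ne') x
        have hy_quad : y ⬝ᵥ S.mulVec y = t⁻¹ * t⁻¹ * (x ⬝ᵥ S.mulVec x) := by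
          rw [hq y, hq x, Finset.mul_sum]
          congr 1; ext i
          rw [Finset.mul_sum]
          congr 1; ext j
          simp [hy]; ring
        have hqx_nonneg : 0 ≤ x ⬝ᵥ S.mulVec x := by
          have := hS.dotProduct_mulVec_nonneg x
          simpa using this
        have ht_inv : 1 ≤ t⁻¹ := by
          nlinarith [mul_inv_cancel₀ ht_pos.ne', inv_nonneg.mpr ht_pos.le]
        have h6 : 1 ≤ t⁻¹ * t⁻¹ := by nlinarith
        have hquad_le : x ⬝ᵥ S.mulVec x ≤ y ⬝ᵥ S.mulVec y := by
          rw [hy_quad]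
          exact le_mul_of_one_le_left hqx_nonneg h6
        have hyA : y ⬝ᵥ S.mulVec y - ρ * (card y : ℝ) ∈ A := ⟨y, hy_sum, rfl⟩
        calc x ⬝ᵥ S.mulVec x - ρ * (card x : ℝ)
            ≤ y ⬝ᵥ S.mulVec y - ρ * (card y : ℝ) := by rw [hy_card]; linarith
          _ ≤ sSup A := le_csSup hAbdd hyA
  · exact hpos
end

section
/- Let Σ be an n×n positive semidefinite matrix with Σ₁₁ = max_i Σ_ii, and let ρ ≥ Σ₁₁. Then φ(ρ) := max{x^T Σ x − ρ·Card(x) : ‖x‖₂ = 1} equals Σ₁₁ − ρ, attained at x = e₁ (the standard basis vector corresponding to the largest diagonal entry). -/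
open Matrix
open scoped BigOperators

lemma card_eq_filter {n : ℕ} (x : Fin n → ℝ) :
    (card x : ℝ) = ((Finset.univ.filter (fun i => x i ≠ 0)).card : ℝ) := by
  unfold card
  congr 1
  rw [← Set.ncard_coe_finset]
  congr 1
  ext i; simp

lemma abs_entry_le {n : ℕ} (S : Matrix (Fin n) (Fin n) ℝ) (hS : S.PosSemidef)
    (i j : Fin n) : |S i j| ≤ Real.sqrt (S i i) * Real.sqrt (S j j) := by
  obtain ⟨B, hBsa, -, hB'⟩ := by
    open scoped MatrixOrder in
    exact CFC.exists_sqrt_of_isSelfAdjoint_of_quasispectrumRestricts hS.isHermitian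
      (QuasispectrumRestricts.nnreal_of_nonneg hS.nonneg)
  have hB : B * B = S := hB'
  have hsym : ∀ a b, B a b = B b a := by
    intro a b
    have h : Bᴴ = B := hBsa
    have := congrFun (congrFun h b) a
    simpa [Matrix.conjTranspose_apply] using this
  have hent : ∀ a b, S a b = ∑ k, B k a * B k b := by
    intro a b
    rw [← hB, Matrix.mul_apply]
    exact Finset.sum_congr rfl fun k _ => by rw [hsym a k]
  have hcs := Finset.sum_mul_sq_le_sq_mul_sq Finset.univ (fun k => B k i) (fun k => B k j)
  have hii : ∑ k, B k i ^ 2 = S i i := by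
    rw [hent i i]; exact Finset.sum_congr rfl fun k _ => sq (B k i)
  have hjj : ∑ k, B k j ^ 2 = S j j := by
    rw [hent j j]; exact Finset.sum_congr rfl fun k _ => sq (B k j)
  have h1 : (S i j) ^ 2 ≤ S i i * S j j := by
    rw [hent i j]; rw [hii, hjj] at hcs; exact hcs
  calc |S i j| = Real.sqrt ((S i j) ^ 2) := (Real.sqrt_sq_eq_abs _).symm
    _ ≤ Real.sqrt (S i i * S j j) := Real.sqrt_le_sqrt h1
    _ = Real.sqrt (S i i) * Real.sqrt (S j j) := by
        refine Real.sqrt_mul ?_ _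
        rw [← hii]
        exact Finset.sum_nonneg fun k _ => sq_nonneg _

/-- for a PSD matrix `Σ` with largest diagonal entry `Σ₁₁` (at index 0)
and `ρ ≥ Σ₁₁`, the maximum of `xᵀΣx − ρ·Card(x)` over the unit sphere equals `Σ₁₁ − ρ`,
attained at the first standard basis vector `e₁`. -/
theorem stmt2 {n : ℕ} (hn : 0 < n) (S : Matrix (Fin n) (Fin n) ℝ) (hS : S.PosSemidef)
    (hmax : ∀ i, S i i ≤ S ⟨0, hn⟩ ⟨0, hn⟩) (ρ : ℝ) (hρ : S ⟨0, hn⟩ ⟨0, hn⟩ ≤ ρ) :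
    IsGreatest {v | ∃ x : Fin n → ℝ, (∑ i, x i ^ 2) = 1 ∧
        v = x ⬝ᵥ S.mulVec x - ρ * (card x : ℝ)}
      (S ⟨0, hn⟩ ⟨0, hn⟩ - ρ) ∧
    (Pi.single (⟨0, hn⟩ : Fin n) (1 : ℝ)) ⬝ᵥ S.mulVec (Pi.single ⟨0, hn⟩ 1)
        - ρ * (card (Pi.single (⟨0, hn⟩ : Fin n) (1 : ℝ)) : ℝ)
      = S ⟨0, hn⟩ ⟨0, hn⟩ - ρ := by
  set i0 : Fin n := ⟨0, hn⟩ with hi0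
  have hsingle : (Pi.single i0 (1:ℝ)) ⬝ᵥ S.mulVec (Pi.single i0 1) = S i0 i0 := by
    simp [Matrix.mulVec_single, single_dotProduct]
  have hcard1 : card (Pi.single i0 (1:ℝ)) = 1 := by
    unfold card
    have : {i : Fin n | (Pi.single i0 (1:ℝ) : Fin n → ℝ) i ≠ 0} = {i0} := by
      ext j
      simp [Pi.single_apply]
    rw [this, Set.ncard_singleton]
  have hsum1 : (∑ i, (Pi.single i0 (1:ℝ) : Fin n → ℝ) i ^ 2) = 1 := by
    simp [Pi.single_apply]
  have hattain : (Pi.single i0 (1:ℝ)) ⬝ᵥ S.mulVec (Pi.single i0 1)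
      - ρ * (card (Pi.single i0 (1:ℝ)) : ℝ) = S i0 i0 - ρ := by
    rw [hsingle, hcard1]; norm_num
  have h00 : (0:ℝ) ≤ S i0 i0 := by
    have := hS.dotProduct_mulVec_nonneg (Pi.single i0 (1:ℝ))
    simpa [hsingle] using this
  refine ⟨⟨⟨Pi.single i0 1, hsum1, hattain.symm⟩, ?_⟩, hattain⟩
  rintro v ⟨x, hx1, rfl⟩
  classical
  set F : Finset (Fin n) := Finset.univ.filter (fun i => x i ≠ 0) with hF
  have hcardF : (card x : ℝ) = (F.card : ℝ) := card_eq_filter x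
  have hFsum : ∑ i ∈ F, x i ^ 2 = 1 := by
    rw [← hx1]
    exact Finset.sum_filter_of_ne (fun i _ h => fun hx => h (by rw [hx]; ring))
  have hF1 : (1:ℝ) ≤ F.card := by
    have : F.Nonempty := by
      by_contra h
      rw [Finset.not_nonempty_iff_eq_empty] at h
      rw [h] at hFsum
      simp at hFsum
    exact_mod_cast this.card_pos
  -- the quadratic form bound
  set a : Fin n → ℝ := fun i => |x i| * Real.sqrt (S i i) with ha
  have hq : x ⬝ᵥ S.mulVec x = ∑ i, ∑ j, x i * (S i j * x j) := by
    simp [dotProduct, Matrix.mulVec, Finset.mul_sum]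
  have hterm : ∀ i j, x i * (S i j * x j) ≤ a i * a j := by
    intro i j
    have h1 : x i * (S i j * x j) ≤ |x i| * (|S i j| * |x j|) := by
      calc x i * (S i j * x j) ≤ |x i * (S i j * x j)| := le_abs_self _
        _ = |x i| * (|S i j| * |x j|) := by rw [abs_mul, abs_mul]
    refine h1.trans ?_
    have h2 := abs_entry_le S hS i j
    calc |x i| * (|S i j| * |x j|)
        ≤ |x i| * ((Real.sqrt (S i i) * Real.sqrt (S j j)) * |x j|) := by
          apply mul_le_mul_of_nonneg_left _ (abs_nonneg _)
          exact mul_le_mul_of_nonneg_right h2 (abs_nonneg _)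
      _ = a i * a j := by rw [ha]; ring
  have hstep1 : x ⬝ᵥ S.mulVec x ≤ (∑ i, a i) * (∑ j, a j) := by
    rw [hq, Finset.sum_mul_sum]
    exact Finset.sum_le_sum fun i _ => Finset.sum_le_sum fun j _ => hterm i j
  have haF : ∑ i, a i = ∑ i ∈ F, a i := by
    refine (Finset.sum_filter_of_ne (fun i _ h => ?_)).symm
    intro hx
    exact h (by simp [ha, hx])
  have ha_nonneg : 0 ≤ ∑ i ∈ F, a i :=
    Finset.sum_nonneg fun i _ => mul_nonneg (abs_nonneg _) (Real.sqrt_nonneg _)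
  have hstep2 : ∑ i ∈ F, a i ≤ Real.sqrt (S i0 i0) * ∑ i ∈ F, |x i| := by
    rw [Finset.mul_sum]
    refine Finset.sum_le_sum fun i _ => ?_
    rw [ha, mul_comm (Real.sqrt (S i0 i0)) (|x i|)]
    exact mul_le_mul_of_nonneg_left (Real.sqrt_le_sqrt (hmax i)) (abs_nonneg _)
  have hstep3 : (∑ i ∈ F, |x i|) ^ 2 ≤ (F.card : ℝ) * 1 := by
    have := sq_sum_le_card_mul_sum_sq (s := F) (f := fun i => |x i|)
    have h2 : ∑ i ∈ F, |x i| ^ 2 = 1 := by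
      rw [← hFsum]; exact Finset.sum_congr rfl fun i _ => sq_abs _
    rw [h2] at this
    simpa using this
  have habs_nonneg : 0 ≤ ∑ i ∈ F, |x i| := Finset.sum_nonneg fun i _ => abs_nonneg _
  have key : x ⬝ᵥ S.mulVec x ≤ S i0 i0 * (F.card : ℝ) := by
    have h3 : (∑ i, a i) * (∑ j, a j) ≤ S i0 i0 * (F.card : ℝ) := by
      rw [haF]
      calc (∑ i ∈ F, a i) * (∑ i ∈ F, a i)
          ≤ (Real.sqrt (S i0 i0) * ∑ i ∈ F, |x i|) * (Real.sqrt (S i0 i0) * ∑ i ∈ F, |x i|) :=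
            mul_le_mul hstep2 hstep2 ha_nonneg
              (mul_nonneg (Real.sqrt_nonneg _) habs_nonneg)
        _ = S i0 i0 * (∑ i ∈ F, |x i|) ^ 2 := by
            rw [mul_mul_mul_comm, Real.mul_self_sqrt h00, ← sq]
        _ ≤ S i0 i0 * ((F.card : ℝ) * 1) :=
            mul_le_mul_of_nonneg_left hstep3 h00
        _ = S i0 i0 * (F.card : ℝ) := by ring
    exact hstep1.trans h3
  rw [hcardF]
  nlinarith [key, hF1, hρ]
end

section
/- Let Σ be an n×n positive semidefinite matrix with Σ₁₁ = max_i Σ_ii, and let ρ ≥ Σ₁₁. Then φ̄(ρ) := max{x^T Σ x − ρ·Card(x) : ‖x‖₂ ≤ 1} = 0, attained at x = 0. In particular, for every nonzero x with ‖x‖₂ ≤ 1 one has ρ·Card(x) ≥ x^T Σ x. -/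
open Matrix
open scoped BigOperators

section aux
variable {n : ℕ} (S : Matrix (Fin n) (Fin n) ℝ)

lemma quad_nonneg (hS : S.PosSemidef) (x : Fin n → ℝ) : 0 ≤ x ⬝ᵥ S.mulVec x := by
  simpa using hS.dotProduct_mulVec_nonneg x

lemma entry_bound (hS : S.PosSemidef) {ρ : ℝ} (hρ : ∀ i, S i i ≤ ρ) (i j : Fin n) :
    |S i j| ≤ ρ := by
  have hsym : S j i = S i j := by simpa using hS.1.apply i j
  have h1 := quad_nonneg S hS (Pi.single i 1 + Pi.single j 1)
  have h2 := quad_nonneg S hS (Pi.single i 1 - Pi.single j 1)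
  simp [Matrix.mulVec_add, Matrix.mulVec_sub, add_dotProduct, sub_dotProduct,
    Matrix.mulVec_single, single_dotProduct, hsym] at h1 h2
  have hii := hρ i
  have hjj := hρ j
  rw [abs_le]
  constructor <;> nlinarith [h1, h2]

lemma main_ineq (hS : S.PosSemidef) {ρ : ℝ} (hρ : ∀ i, S i i ≤ ρ)
    (x : Fin n → ℝ) (hx : (∑ i, x i ^ 2) ≤ 1) (hρ0 : 0 ≤ ρ) :
    x ⬝ᵥ S.mulVec x ≤ ρ * (card x : ℝ) := by
  classical
  set T : Finset (Fin n) := Finset.univ.filter (fun i => x i ≠ 0) with hT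
  have hcard : (card x : ℝ) = (T.card : ℝ) := by
    have : {i | x i ≠ 0}.ncard = T.card := by
      rw [Set.ncard_eq_toFinset_card']
      congr 1
      ext i
      simp [hT]
    rw [card, this]
  -- step 1: expand quadratic form and bound by ρ * (∑ |x i|)^2
  have hexp : x ⬝ᵥ S.mulVec x = ∑ i, ∑ j, x i * (S i j * x j) := by
    simp [dotProduct, Matrix.mulVec, Finset.mul_sum]
  have habs : ∑ i, |x i| = ∑ i ∈ T, |x i| := by
    rw [eq_comm, hT]
    apply Finset.sum_filter_of_ne
    intro i _ h h0
    simp [h0] at h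
  have hstep1 : x ⬝ᵥ S.mulVec x ≤ ρ * (∑ i, |x i|) ^ 2 := by
    rw [hexp, sq, Finset.sum_mul_sum, Finset.mul_sum]
    apply Finset.sum_le_sum
    intro i _
    rw [Finset.mul_sum]
    apply Finset.sum_le_sum
    intro j _
    have h := entry_bound S hS hρ i j
    calc x i * (S i j * x j) ≤ |x i * (S i j * x j)| := le_abs_self _
      _ = |x i| * |S i j| * |x j| := by rw [abs_mul, abs_mul]; ring
      _ ≤ |x i| * ρ * |x j| := by
          apply mul_le_mul_of_nonneg_right _ (abs_nonneg _)
          exact mul_le_mul_of_nonneg_left h (abs_nonneg _)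
      _ = ρ * (|x i| * |x j|) := by ring
  -- step 2: Cauchy-Schwarz on support
  have hcs : (∑ i, |x i|) ^ 2 ≤ (T.card : ℝ) * 1 := by
    rw [habs]
    calc (∑ i ∈ T, |x i|) ^ 2 ≤ (T.card : ℝ) * ∑ i ∈ T, |x i| ^ 2 :=
          sq_sum_le_card_mul_sum_sq
      _ ≤ (T.card : ℝ) * 1 := by
          apply mul_le_mul_of_nonneg_left _ (Nat.cast_nonneg _)
          calc ∑ i ∈ T, |x i| ^ 2 ≤ ∑ i, x i ^ 2 := by
                simp_rw [sq_abs]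
                exact Finset.sum_le_sum_of_subset_of_nonneg (Finset.subset_univ _)
                  (fun i _ _ => sq_nonneg _)
            _ ≤ 1 := hx
  calc x ⬝ᵥ S.mulVec x ≤ ρ * (∑ i, |x i|) ^ 2 := hstep1
    _ ≤ ρ * ((T.card : ℝ) * 1) := mul_le_mul_of_nonneg_left hcs hρ0
    _ = ρ * (card x : ℝ) := by rw [hcard]; ring

end aux

/-- for a PSD matrix `Σ` and `ρ ≥ max_i Σ_ii`, the maximum of
`xᵀΣx − ρ·Card(x)` over the unit ball equals `0`, attained at `x = 0`; in particular
`ρ·Card(x) ≥ xᵀΣx` for every nonzero `x` in the unit ball. -/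
theorem stmt3 {n : ℕ} (S : Matrix (Fin n) (Fin n) ℝ) (hS : S.PosSemidef)
    (ρ : ℝ) (hρ : ∀ i, S i i ≤ ρ) :
    IsGreatest {v | ∃ x : Fin n → ℝ, (∑ i, x i ^ 2) ≤ 1 ∧
        v = x ⬝ᵥ S.mulVec x - ρ * (card x : ℝ)} 0 ∧
    (0 : Fin n → ℝ) ⬝ᵥ S.mulVec 0 - ρ * (card (0 : Fin n → ℝ) : ℝ) = 0 ∧
    (∀ x : Fin n → ℝ, x ≠ 0 → (∑ i, x i ^ 2) ≤ 1 →
      x ⬝ᵥ S.mulVec x ≤ ρ * (card x : ℝ)) := by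
  have hcard0 : card (0 : Fin n → ℝ) = 0 := by
    simp [card]
  have hzero : (0 : Fin n → ℝ) ⬝ᵥ S.mulVec 0 - ρ * (card (0 : Fin n → ℝ) : ℝ) = 0 := by
    simp [hcard0]
  have hkey : ∀ x : Fin n → ℝ, x ≠ 0 → (∑ i, x i ^ 2) ≤ 1 →
      x ⬝ᵥ S.mulVec x ≤ ρ * (card x : ℝ) := by
    intro x hx hx1
    obtain ⟨i, hi⟩ := Function.ne_iff.mp hx
    have hdiag : 0 ≤ S i i := by
      simpa using quad_nonneg S hS (Pi.single i 1)
    exact main_ineq S hS hρ x hx1 (hdiag.trans (hρ i))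
  refine ⟨⟨⟨0, by simp, hzero.symm⟩, ?_⟩, hzero, hkey⟩
  rintro v ⟨x, hx1, rfl⟩
  by_cases hx : x = 0
  · subst hx; rw [hzero]
  · linarith [hkey x hx hx1]
end

section
/- Let Σ be an n×n positive semidefinite matrix and define, for u ∈ {0,1}ⁿ and D(u) the diagonal matrix with entries u, φ̃(ρ) = max over u ∈ {0,1}ⁿ and y with yᵀy ≤ 1 of yᵀ D(u) Σ D(u) y − ρ·𝟏ᵀu. Then φ̃(ρ) equals φ̄(ρ) := max{xᵀΣx − ρ·Card(x) : ‖x‖₂ ≤ 1}. -/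
/-!
Writing `x = D(u) y` turns every term `yᵀ D(u) Σ D(u) y − ρ 𝟏ᵀu` of `φ̃` into `xᵀ Σ x − ρ 𝟏ᵀu`
with `‖x‖₂ ≤ ‖y‖₂` and `Card x ≤ 𝟏ᵀu`, hence into something below a term of `φ̄`; conversely
`x` itself arises from `y = x` and `u` the indicator of its support. Two sets of reals each
dominating the other have the same `sSup`, whether or not they are bounded.
-/

open Matrix
open scoped BigOperators

section

variable {ι R : Type*}

theorem dotProduct_diagonal_mul_mul_diagonal_mulVec [Fintype ι] [DecidableEq ι] [CommSemiring R]
    (S : Matrix ι ι R) (u y : ι → R) :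
    y ⬝ᵥ (diagonal u * S * diagonal u) *ᵥ y = (u * y) ⬝ᵥ S *ᵥ (u * y) := by
  rw [← mulVec_mulVec, ← mulVec_mulVec, dotProduct_mulVec, funext (vecMul_diagonal y u),
    funext (mulVec_diagonal u y)]
  simp only [mul_comm (y _)]
  rfl

variable {u : ι → ℝ}

theorem sum_eq_ncard_support_of_binary [Fintype ι] (hu : ∀ i, u i = 0 ∨ u i = 1) :
    ∑ i, u i = (Function.support u).ncard := by
  classical
  calc ∑ i, u i = ∑ i, if u i ≠ 0 then (1 : ℝ) else 0 :=
        Finset.sum_congr rfl fun i _ => by rcases hu i with h | h <;> simp [h]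
    _ = (Function.support u).ncard := by
        rw [Finset.sum_boole, Set.ncard_eq_toFinset_card', Function.support, Set.toFinset_ofPred]

theorem sum_sq_mul_le_of_binary [Fintype ι] (hu : ∀ i, u i = 0 ∨ u i = 1) (y : ι → ℝ) :
    ∑ i, (u * y) i ^ 2 ≤ ∑ i, y i ^ 2 :=
  Finset.sum_le_sum fun i _ => by rcases hu i with h | h <;> simp [h, sq_nonneg]

theorem exists_binary_mul_eq_self (x : ι → ℝ) :
    ∃ u : ι → ℝ, (∀ i, u i = 0 ∨ u i = 1) ∧ u * x = x ∧
      Function.support u = Function.support x := by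
  classical
  refine ⟨fun i => if x i = 0 then 0 else 1, fun i => ?_, funext fun i => ?_, ?_⟩
  · by_cases h : x i = 0 <;> simp [h]
  · by_cases h : x i = 0 <;> simp [h]
  · ext i; by_cases h : x i = 0 <;> simp [h]

end

theorem stmt6_general {n : ℕ} (S : Matrix (Fin n) (Fin n) ℝ)
    (ρ : ℝ) (hρ : 0 ≤ ρ) :
    sSup {v | ∃ u : Fin n → ℝ, ∃ y : Fin n → ℝ,
        (∀ i, u i = 0 ∨ u i = 1) ∧ (∑ i, y i ^ 2) ≤ 1 ∧
        v = y ⬝ᵥ (Matrix.diagonal u * S * Matrix.diagonal u).mulVec y - ρ * ∑ i, u i} =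
      sSup {v | ∃ x : Fin n → ℝ, (∑ i, x i ^ 2) ≤ 1 ∧
        v = x ⬝ᵥ S.mulVec x - ρ * (card x : ℝ)} := by
  apply csSup_eq_csSup_of_forall_exists_le
  · rintro _ ⟨u, y, hu, hy, rfl⟩
    refine ⟨_, ⟨u * y, (sum_sq_mul_le_of_binary hu y).trans hy, rfl⟩, ?_⟩
    have hcard : card (u * y) ≤ (Function.support u).ncard :=
      Set.ncard_le_ncard (Function.support_mul_subset_left u y)
    rw [dotProduct_diagonal_mul_mul_diagonal_mulVec, sum_eq_ncard_support_of_binary hu]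
    gcongr
  · rintro _ ⟨x, hx, rfl⟩
    obtain ⟨u, hu, hux, hsupp⟩ := exists_binary_mul_eq_self x
    refine ⟨_, ⟨u, x, hu, hx, rfl⟩, ?_⟩
    rw [dotProduct_diagonal_mul_mul_diagonal_mulVec, hux, sum_eq_ncard_support_of_binary hu, hsupp]
    rfl

/-- for a PSD matrix `Σ` and `ρ ≥ 0`,
`φ̃(ρ) = max_{u ∈ {0,1}ⁿ, yᵀy ≤ 1} yᵀ D(u) Σ D(u) y − ρ·𝟏ᵀu` equals
`φ̄(ρ) = max_{‖x‖₂ ≤ 1} xᵀΣx − ρ·Card(x)`. -/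
theorem stmt6 {n : ℕ} (S : Matrix (Fin n) (Fin n) ℝ) (hS : S.PosSemidef)
    (ρ : ℝ) (hρ : 0 ≤ ρ) :
    sSup {v | ∃ u : Fin n → ℝ, ∃ y : Fin n → ℝ,
        (∀ i, u i = 0 ∨ u i = 1) ∧ (∑ i, y i ^ 2) ≤ 1 ∧
        v = y ⬝ᵥ (Matrix.diagonal u * S * Matrix.diagonal u).mulVec y - ρ * ∑ i, u i} =
      sSup {v | ∃ x : Fin n → ℝ, (∑ i, x i ^ 2) ≤ 1 ∧
        v = x ⬝ᵥ S.mulVec x - ρ * (card x : ℝ)} :=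
  stmt6_general S ρ hρ
end

section
/- Let Σ = AᵀA with columns a₁,...,aₙ ∈ ℝᵐ of A, and 0 ≤ ρ < Σ₁₁ = max_i ‖a_i‖₂². Then φ(ρ) := max{xᵀΣx − ρ·Card(x) : ‖x‖₂ = 1} equals max over unit vectors ξ ∈ ℝᵐ of Σ_{i=1}ⁿ ((a_iᵀξ)² − ρ)₊, where (t)₊ = max(t,0). -/
open Matrix
open scoped BigOperators

/-!
Write `c = Aᵀ ξ`, so that `cᵢ = a_iᵀ ξ` and `ξᵀ A x = cᵀ x`. For a unit vector `x`, choose the unit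
`ξ` along `A x`: then `xᵀ Σ x = ‖A x‖² = (cᵀ x)²`, and Cauchy–Schwarz on the support of `x` bounds
this by `∑_{xᵢ ≠ 0} cᵢ²`, whence `xᵀ Σ x - ρ Card x ≤ ∑ᵢ (cᵢ² - ρ)₊`. Conversely, for a unit `ξ`
let `I = {i | cᵢ² > ρ}`; normalising the restriction of `c` to `I` gives a unit `x` with support
`I` and `‖A x‖² ≥ (ξᵀ A x)² = ∑_{i ∈ I} cᵢ²`, so `x` does at least as well as `ξ`. When `I = ∅`
the dual value is `0` and a basis vector `eᵢ` with `Σᵢᵢ > ρ` does better. Every value of either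
problem is thus dominated by a value of the other, so the suprema agree.
-/

section

open Finset

variable {ι κ : Type*} [Fintype ι]

lemma dotProduct_self_eq_sum_sq (v : ι → ℝ) : v ⬝ᵥ v = ∑ i, v i ^ 2 := by
  simp only [dotProduct, sq]

lemma exists_sum_sq_eq_one_of_ne_zero {z : ι → ℝ} (hz : z ≠ 0) {w : ι → ℝ}
    (hw : w ⬝ᵥ z = ∑ i, z i ^ 2) :
    ∃ u : ι → ℝ, ∑ i, u i ^ 2 = 1 ∧ (∀ i, u i ≠ 0 ↔ z i ≠ 0) ∧
      (w ⬝ᵥ u) ^ 2 = ∑ i, z i ^ 2 := by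
  have hS : 0 < ∑ i, z i ^ 2 := by
    refine lt_of_le_of_ne (sum_nonneg fun i _ => sq_nonneg _) (Ne.symm ?_)
    rwa [← dotProduct_self_eq_sum_sq, Ne, dotProduct_self_eq_zero]
  set S := ∑ i, z i ^ 2
  refine ⟨(√S)⁻¹ • z, ?_, fun i => ?_, ?_⟩
  · simp only [Pi.smul_apply, smul_eq_mul, mul_pow, ← mul_sum, inv_pow, Real.sq_sqrt hS.le]
    exact inv_mul_cancel₀ hS.ne'
  · simp [(Real.sqrt_pos.2 hS).ne']
  · rw [dotProduct_smul, hw, smul_eq_mul, mul_pow, inv_pow, Real.sq_sqrt hS.le]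
    field_simp

lemma exists_sum_sq_eq_one_sq_dotProduct_eq [Nonempty ι] (y : ι → ℝ) :
    ∃ ξ : ι → ℝ, ∑ i, ξ i ^ 2 = 1 ∧ (ξ ⬝ᵥ y) ^ 2 = ∑ i, y i ^ 2 := by
  classical
  by_cases hy : y = 0
  · refine ⟨Pi.single (Classical.arbitrary ι) 1, ?_, by simp [hy]⟩
    simp [apply_ite (· ^ 2), Pi.single_apply]
  · obtain ⟨ξ, hξ, -, h⟩ := exists_sum_sq_eq_one_of_ne_zero hy (dotProduct_self_eq_sum_sq y)
    exact ⟨ξ, hξ, by rwa [dotProduct_comm]⟩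

lemma sq_dotProduct_le_sum_support (c x : ι → ℝ) (hx : ∑ i, x i ^ 2 = 1) :
    (c ⬝ᵥ x) ^ 2 ≤ ∑ i with x i ≠ 0, c i ^ 2 := by
  calc (c ⬝ᵥ x) ^ 2 = (∑ i with x i ≠ 0, c i * x i) ^ 2 := by
        rw [dotProduct, sum_filter_of_ne fun i _ h => right_ne_zero_of_mul h]
    _ ≤ (∑ i with x i ≠ 0, c i ^ 2) * ∑ i with x i ≠ 0, x i ^ 2 := sum_mul_sq_le_sq_mul_sq ..
    _ ≤ (∑ i with x i ≠ 0, c i ^ 2) * 1 := by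
        gcongr
        exact hx ▸ sum_le_univ_sum_of_nonneg (f := fun i => x i ^ 2) fun i => sq_nonneg _
    _ = ∑ i with x i ≠ 0, c i ^ 2 := mul_one _

lemma sum_le_sum_max_zero (s : Finset ι) (f : ι → ℝ) : ∑ i ∈ s, f i ≤ ∑ i, max (f i) 0 :=
  (sum_le_sum fun _ _ => le_max_left _ _).trans
    (sum_le_univ_sum_of_nonneg fun _ => le_max_right _ _)

lemma sum_max_zero_eq_sum_filter (f : ι → ℝ) : ∑ i, max (f i) 0 = ∑ i with 0 < f i, f i := by
  rw [sum_filter]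
  refine sum_congr rfl fun i _ => ?_
  split_ifs with h
  · exact max_eq_left h.le
  · exact max_eq_right (not_lt.1 h)

lemma dotProduct_mulVec_transpose_mul_self [Fintype κ] (A : Matrix κ ι ℝ) (x : ι → ℝ) :
    x ⬝ᵥ (Aᵀ * A) *ᵥ x = ∑ j, (A *ᵥ x) j ^ 2 := by
  rw [← mulVec_mulVec, dotProduct_mulVec, vecMul_transpose, dotProduct_self_eq_sum_sq]

end

lemma card_eq_card_filter {n : ℕ} (x : Fin n → ℝ) :
    card x = (Finset.univ.filter (x · ≠ 0)).card := by
  rw [card, ← Set.ncard_coe_finset]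
  simp

section

variable {κ : Type*} [Fintype κ] {n : ℕ}

noncomputable def penalizedVariance (A : Matrix κ (Fin n) ℝ) (ρ : ℝ) (x : Fin n → ℝ) : ℝ :=
  x ⬝ᵥ (Aᵀ * A) *ᵥ x - ρ * card x

noncomputable def penalizedDual (A : Matrix κ (Fin n) ℝ) (ρ : ℝ) (ξ : κ → ℝ) : ℝ :=
  ∑ i, max ((Aᵀ *ᵥ ξ) i ^ 2 - ρ) 0

open Finset

lemma exists_penalizedVariance_le_penalizedDual [Nonempty κ] (A : Matrix κ (Fin n) ℝ) (ρ : ℝ)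
    {x : Fin n → ℝ} (hx : ∑ i, x i ^ 2 = 1) :
    ∃ ξ : κ → ℝ, ∑ j, ξ j ^ 2 = 1 ∧ penalizedVariance A ρ x ≤ penalizedDual A ρ ξ := by
  obtain ⟨ξ, hξ, hξAx⟩ := exists_sum_sq_eq_one_sq_dotProduct_eq (A *ᵥ x)
  refine ⟨ξ, hξ, ?_⟩
  have hCS := sq_dotProduct_le_sum_support (Aᵀ *ᵥ ξ) x hx
  calc penalizedVariance A ρ x = (Aᵀ *ᵥ ξ ⬝ᵥ x) ^ 2 - ρ * #{i | x i ≠ 0} := by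
        rw [penalizedVariance, dotProduct_mulVec_transpose_mul_self, ← hξAx, dotProduct_mulVec,
          mulVec_transpose, card_eq_card_filter]
    _ ≤ ∑ i with x i ≠ 0, ((Aᵀ *ᵥ ξ) i ^ 2 - ρ) := by
        rw [sum_sub_distrib, sum_const, nsmul_eq_mul, mul_comm]
        linarith
    _ ≤ penalizedDual A ρ ξ := sum_le_sum_max_zero _ _

lemma exists_penalizedDual_le_penalizedVariance (A : Matrix κ (Fin n) ℝ) {ρ : ℝ} (hρ : 0 ≤ ρ)
    {i₀ : Fin n} (hi₀ : ρ < ∑ j, A j i₀ ^ 2) {ξ : κ → ℝ} (hξ : ∑ j, ξ j ^ 2 = 1) :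
    ∃ x : Fin n → ℝ, ∑ i, x i ^ 2 = 1 ∧ penalizedDual A ρ ξ ≤ penalizedVariance A ρ x := by
  classical
  set c := Aᵀ *ᵥ ξ
  by_cases hI : ∀ i, c i ^ 2 ≤ ρ
  · refine ⟨Pi.single i₀ 1, by simp [apply_ite (· ^ 2), Pi.single_apply], ?_⟩
    have hsingle : penalizedVariance A ρ (Pi.single i₀ 1) = ∑ j, A j i₀ ^ 2 - ρ := by
      rw [penalizedVariance, dotProduct_mulVec_transpose_mul_self, card_eq_card_filter]
      simp [mulVec_single, Pi.single_apply, filter_eq']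
    rw [penalizedDual, sum_eq_zero fun i _ => max_eq_right (sub_nonpos.2 (hI i)), hsingle]
    linarith
  push Not at hI
  set z : Fin n → ℝ := fun i => if ρ < c i ^ 2 then c i else 0
  have hz_ne : ∀ i, z i ≠ 0 ↔ ρ < c i ^ 2 := fun i => by
    by_cases h : ρ < c i ^ 2
    · simp only [z, if_pos h, h, iff_true]
      rintro h0
      rw [h0] at h
      linarith
    · simp [z, h]
  obtain ⟨i₁, hi₁⟩ := hI
  have hz : z ≠ 0 := fun h => (hz_ne i₁).2 hi₁ (congrFun h i₁)
  have hcz : c ⬝ᵥ z = ∑ i, z i ^ 2 := sum_congr rfl fun i _ => by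
    dsimp only [z]
    split_ifs <;> ring
  obtain ⟨x, hx, hxz, hcx⟩ := exists_sum_sq_eq_one_of_ne_zero hz hcz
  refine ⟨x, hx, ?_⟩
  have hCS : (c ⬝ᵥ x) ^ 2 ≤ ∑ j, (A *ᵥ x) j ^ 2 :=
    calc (c ⬝ᵥ x) ^ 2 = (ξ ⬝ᵥ A *ᵥ x) ^ 2 := by rw [dotProduct_mulVec, ← mulVec_transpose]
      _ ≤ (∑ j, ξ j ^ 2) * ∑ j, (A *ᵥ x) j ^ 2 := sum_mul_sq_le_sq_mul_sq ..
      _ = ∑ j, (A *ᵥ x) j ^ 2 := by rw [hξ, one_mul]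
  calc penalizedDual A ρ ξ = ∑ i with ρ < c i ^ 2, (c i ^ 2 - ρ) := by
        simp_rw [penalizedDual, sum_max_zero_eq_sum_filter, sub_pos]
        rfl
    _ = ∑ i, z i ^ 2 - ρ * #{i | x i ≠ 0} := by
        rw [sum_sub_distrib, sum_const, nsmul_eq_mul, mul_comm,
          filter_congr fun i _ => (hxz i).trans (hz_ne i), sum_filter]
        congr 2
        ext i
        dsimp only [z]
        split_ifs <;> ring
    _ ≤ penalizedVariance A ρ x := by
        rw [penalizedVariance, dotProduct_mulVec_transpose_mul_self, card_eq_card_filter]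
        linarith

end

/-- for `Σ = AᵀA` with columns `a_i` and `0 ≤ ρ < Σ₁₁ = max_i ‖a_i‖₂²`,
`φ(ρ) = max_{‖ξ‖₂ = 1} ∑ i, ((a_iᵀξ)² − ρ)₊`. -/
theorem stmt9 {m n : ℕ} (A : Matrix (Fin m) (Fin n) ℝ) (ρ : ℝ) (hρ0 : 0 ≤ ρ)
    (hρ1 : ∃ i, ρ < ∑ j, (A j i) ^ 2) :
    sSup {v | ∃ x : Fin n → ℝ, (∑ i, x i ^ 2) = 1 ∧
        v = x ⬝ᵥ (Aᵀ * A).mulVec x - ρ * (card x : ℝ)} =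
      sSup {v | ∃ ξ : Fin m → ℝ, (∑ j, ξ j ^ 2) = 1 ∧
        v = ∑ i, max ((∑ j, A j i * ξ j) ^ 2 - ρ) 0} := by
  obtain ⟨i₀, hi₀⟩ := hρ1
  have : Nonempty (Fin m) := by
    refine Fin.pos_iff_nonempty.1 (Nat.pos_of_ne_zero ?_)
    rintro rfl
    rw [Finset.univ_eq_empty, Finset.sum_empty] at hi₀
    linarith
  apply csSup_eq_csSup_of_forall_exists_le
  · rintro _ ⟨x, hx, rfl⟩
    obtain ⟨ξ, hξ, h⟩ := exists_penalizedVariance_le_penalizedDual A ρ hx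
    exact ⟨_, ⟨ξ, hξ, rfl⟩, h⟩
  · rintro _ ⟨ξ, hξ, rfl⟩
    obtain ⟨x, hx, h⟩ := exists_penalizedDual_le_penalizedVariance A hρ0 hi₀ hξ
    exact ⟨_, ⟨x, hx, rfl⟩, h⟩
end

section
/- If Σ = aaᵀ is a rank-one n×n positive semidefinite matrix with a ∈ ℝⁿ and 0 ≤ ρ < max_i a_i², then φ(ρ) := max{xᵀΣx − ρ·Card(x) : ‖x‖₂ = 1} equals Σ_{i=1}ⁿ (a_i² − ρ)₊. -/
/-!
On the support `S` of a unit vector `x`, Cauchy–Schwarz gives `(aᵀx)² ≤ ∑_{i ∈ S} a_i²`, so the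
objective is at most `∑_{i ∈ S} (a_i² - ρ) ≤ ∑_i (a_i² - ρ)₊`. Equality is attained by normalising
`a` restricted to `T = {i | a_i² > ρ}`: `T` is nonempty since `ρ < max a_i²`, and its support is
all of `T` because `a_i² > ρ ≥ 0` there, so the cardinality term is exactly `ρ · |T|`.
-/

open Matrix
open scoped BigOperators

open scoped Finset

lemma card_eq_card_filter_ne_zero {n : ℕ} (x : Fin n → ℝ) : card x = #{i | x i ≠ 0} := by
  rw [card, ← Set.ncard_coe_finset]
  congr
  ext
  simp

lemma dotProduct_vecMulVec_self_mulVec {ι R : Type*} [Fintype ι] [CommSemiring R] (a x : ι → R) :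
    x ⬝ᵥ vecMulVec a a *ᵥ x = (a ⬝ᵥ x) ^ 2 := by
  simp [vecMulVec_mulVec, dotProduct_comm x, sq]

lemma sq_dotProduct_le_sum_sq_filter_ne_zero {ι : Type*} [Fintype ι] (a x : ι → ℝ)
    (hx : ∑ i, x i ^ 2 = 1) : (a ⬝ᵥ x) ^ 2 ≤ ∑ i with x i ≠ 0, a i ^ 2 := by
  have hdot : ∑ i with x i ≠ 0, a i * x i = a ⬝ᵥ x :=
    Finset.sum_filter_of_ne fun i _ h hxi => h (by rw [hxi, mul_zero])
  have hnorm : ∑ i with x i ≠ 0, x i ^ 2 = 1 :=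
    hx ▸ Finset.sum_filter_of_ne fun i _ h hxi => h (by rw [hxi, sq, mul_zero])
  simpa [hdot, hnorm] using Finset.sum_mul_sq_le_sq_mul_sq {i | x i ≠ 0} a x

lemma sum_sub_mul_card {ι : Type*} (s : Finset ι) (f : ι → ℝ) (ρ : ℝ) :
    ∑ i ∈ s, f i - ρ * #s = ∑ i ∈ s, (f i - ρ) := by
  rw [Finset.sum_sub_distrib, Finset.sum_const, nsmul_eq_mul, mul_comm]

lemma sq_dotProduct_sub_mul_card_le {n : ℕ} (a x : Fin n → ℝ) (ρ : ℝ) (hx : ∑ i, x i ^ 2 = 1) :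
    (a ⬝ᵥ x) ^ 2 - ρ * card x ≤ ∑ i, max (a i ^ 2 - ρ) 0 :=
  calc (a ⬝ᵥ x) ^ 2 - ρ * card x
      ≤ ∑ i with x i ≠ 0, a i ^ 2 - ρ * #{i | x i ≠ 0} := by
        rw [card_eq_card_filter_ne_zero]
        gcongr
        exact sq_dotProduct_le_sum_sq_filter_ne_zero a x hx
    _ = ∑ i with x i ≠ 0, (a i ^ 2 - ρ) := sum_sub_mul_card _ _ _
    _ ≤ ∑ i with x i ≠ 0, max (a i ^ 2 - ρ) 0 := by gcongr; exact le_max_left _ _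
    _ ≤ ∑ i, max (a i ^ 2 - ρ) 0 :=
        Finset.sum_le_sum_of_subset_of_nonneg (Finset.subset_univ _) fun _ _ _ => le_max_right _ _

lemma sum_filter_pos_eq_sum_max {ι : Type*} [Fintype ι] (f : ι → ℝ) :
    ∑ i with 0 < f i, f i = ∑ i, max (f i) 0 := by
  rw [Finset.sum_filter]
  refine Finset.sum_congr rfl fun i _ => ?_
  split_ifs with h
  · exact (max_eq_left h.le).symm
  · exact (max_eq_right (not_lt.mp h)).symm

lemma exists_sum_sq_eq_one_sq_dotProduct_eq_s12 {ι : Type*} [Fintype ι] [DecidableEq ι]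
    (a : ι → ℝ) (T : Finset ι) (hT : T.Nonempty) (ha : ∀ i ∈ T, a i ≠ 0) :
    ∃ x : ι → ℝ, ∑ i, x i ^ 2 = 1 ∧ (a ⬝ᵥ x) ^ 2 = ∑ i ∈ T, a i ^ 2 ∧
      ({i | x i ≠ 0} : Finset ι) = T := by
  have hpos : 0 < ∑ i ∈ T, a i ^ 2 :=
    Finset.sum_pos (fun i hi => pow_two_pos_of_ne_zero (ha i hi)) hT
  have hc : 0 < √(∑ i ∈ T, a i ^ 2) := Real.sqrt_pos.mpr hpos
  refine ⟨fun i => if i ∈ T then a i / √(∑ i ∈ T, a i ^ 2) else 0, ?_, ?_, ?_⟩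
  · simp_rw [ite_pow, div_pow, Real.sq_sqrt hpos.le]
    simp [Finset.sum_ite_mem, ← Finset.sum_div, hpos.ne']
  · simp_rw [dotProduct, mul_ite, mul_zero, Finset.sum_ite_mem, Finset.univ_inter,
      mul_div_assoc', ← sq, ← Finset.sum_div, div_pow, Real.sq_sqrt hpos.le]
    rw [sq, mul_div_assoc, div_self hpos.ne', mul_one]
  · ext i
    by_cases hi : i ∈ T <;> simp [hi, hc.ne', ha]

/-- for a rank-one PSD matrix `Σ = aaᵀ` and `0 ≤ ρ < max_i a_i²`,
`φ(ρ) = ∑ i, (a_i² − ρ)₊`. -/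
theorem stmt12 {n : ℕ} (a : Fin n → ℝ) (ρ : ℝ) (hρ0 : 0 ≤ ρ) (hρ1 : ∃ i, ρ < a i ^ 2) :
    sSup {v | ∃ x : Fin n → ℝ, (∑ i, x i ^ 2) = 1 ∧
        v = x ⬝ᵥ (vecMulVec a a).mulVec x - ρ * (card x : ℝ)} =
      ∑ i, max (a i ^ 2 - ρ) 0 := by
  obtain ⟨i₀, hi₀⟩ := hρ1
  have hT : ({i | 0 < a i ^ 2 - ρ} : Finset (Fin n)).Nonempty := ⟨i₀, by simpa using hi₀⟩
  have ha : ∀ i ∈ ({i | 0 < a i ^ 2 - ρ} : Finset (Fin n)), a i ≠ 0 := by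
    intro i hi h0
    rw [Finset.mem_filter, h0] at hi
    linarith [hi.2]
  obtain ⟨x, hx, hxa, hsupp⟩ := exists_sum_sq_eq_one_sq_dotProduct_eq_s12 a _ hT ha
  refine IsGreatest.csSup_eq ⟨⟨x, hx, ?_⟩, ?_⟩
  · rw [dotProduct_vecMulVec_self_mulVec, hxa, card_eq_card_filter_ne_zero, hsupp,
      sum_sub_mul_card, ← sum_filter_pos_eq_sum_max]
  · rintro _ ⟨y, hy, rfl⟩
    rw [dotProduct_vecMulVec_self_mulVec]
    exact sq_dotProduct_sub_mul_card_le a y ρ hy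
end

section
/- Let B be a symmetric m×m matrix and X a positive semidefinite m×m matrix. Then max{⟨P, B⟩ : 0 ⪯ P ⪯ X} = Tr((X^{1/2} B X^{1/2})₊), where ⟨P,B⟩ = Tr(PB) and M₊ denotes the matrix obtained from the symmetric matrix M by replacing its negative eigenvalues with zero (so Tr(M₊) is the sum of positive eigenvalues of M). -/
open Matrix
open scoped BigOperators

section
open scoped ComplexOrder

/-- The positive semidefinite square root of a PSD matrix (as `Matrix.PosSemidef.sqrt` was defined
in Mathlib of December 2024; it has since been removed in favour of `CFC.sqrt`). -/
noncomputable def Matrix.PosSemidef.sqrt {n 𝕜 : Type*} [Fintype n] [DecidableEq n] [RCLike 𝕜]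
    {A : Matrix n n 𝕜} (hA : A.PosSemidef) : Matrix n n 𝕜 :=
  hA.1.eigenvectorUnitary.1 * diagonal ((↑) ∘ (√·) ∘ hA.1.eigenvalues) *
    (star hA.1.eigenvectorUnitary : Matrix n n 𝕜)

end

/-!
Write `S = X^{1/2}`. The map `Q ↦ S Q S` sends the operator interval `[0, 1]` onto `[0, X]`:
conjugation gives one inclusion, and for `0 ≤ P ≤ X` the kernel of `X` lies in that of `P`, so
`P = S (T P T) S` with `T` the pseudo-inverse of `S` and `0 ≤ T P T ≤ T X T ≤ 1`. Since
`Tr (S Q S B) = Tr (Q H)` with `H = S B S`, it remains to maximise `Tr (Q H)` over `0 ≤ Q ≤ 1`.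
Splitting `H = H⁺ - H⁻` gives `Tr (Q H) ≤ Tr (Q H⁺) ≤ Tr H⁺`, with equality when `Q` is the
spectral projection of `H` onto its positive eigenvalues.
-/

open scoped MatrixOrder ComplexOrder

section

variable {A : Type*} [Ring A] [StarRing A] [PartialOrder A] [StarOrderedRing A]
  [TopologicalSpace A] [Algebra ℝ A] [ContinuousFunctionalCalculus ℝ A IsSelfAdjoint]
  [NonnegSpectrumClass ℝ A] {a : A}

lemma cfc_sqrt_mul_self (ha : 0 ≤ a) : cfc Real.sqrt a * cfc Real.sqrt a = a := by
  rw [← cfc_mul ..]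
  conv_rhs => rw [← cfc_id' ℝ a]
  exact cfc_congr fun x hx => Real.mul_self_sqrt (spectrum_nonneg_of_nonneg ha hx)

lemma cfc_sqrt_mul_mul_mem_Icc (ha : 0 ≤ a) {q : A} (hq : q ∈ Set.Icc 0 1) :
    cfc Real.sqrt a * q * cfc Real.sqrt a ∈ Set.Icc 0 a := by
  have hs : IsSelfAdjoint (cfc Real.sqrt a) := cfc_predicate _ _
  refine ⟨hs.conjugate_nonneg hq.1, ?_⟩
  calc cfc Real.sqrt a * q * cfc Real.sqrt a ≤ cfc Real.sqrt a * 1 * cfc Real.sqrt a :=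
        hs.conjugate_le_conjugate hq.2
    _ = a := by rw [mul_one, cfc_sqrt_mul_self ha]

end

namespace Matrix

variable {n 𝕜 : Type*} [Fintype n] [RCLike 𝕜]

lemma PosSemidef.sqrt_eq_cfc [DecidableEq n] {A : Matrix n n 𝕜} (hA : A.PosSemidef) :
    hA.sqrt = cfc Real.sqrt A := by
  rw [hA.1.cfc_eq, IsHermitian.cfc, Unitary.conjStarAlgAut_apply]
  rfl

lemma IsHermitian.trace_cfc [DecidableEq n] {A : Matrix n n 𝕜} (hA : A.IsHermitian) (f : ℝ → ℝ) :
    (cfc f A).trace = ∑ i, (f (hA.eigenvalues i) : 𝕜) := by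
  rw [hA.cfc_eq, IsHermitian.cfc, Unitary.conjStarAlgAut_apply, trace_mul_cycle,
    Unitary.coe_star_mul_self, one_mul, trace_diagonal]
  rfl

lemma trace_mul_nonneg [DecidableEq n] {A B : Matrix n n 𝕜} (hA : 0 ≤ A) (hB : 0 ≤ B) :
    0 ≤ (A * B).trace := by
  obtain ⟨R, hR, rfl⟩ : ∃ R, IsSelfAdjoint R ∧ B = R * R :=
    ⟨CFC.sqrt B, (CFC.sqrt_nonneg B).isSelfAdjoint, (CFC.sqrt_mul_sqrt_self B hB).symm⟩
  rw [← mul_assoc, trace_mul_comm, ← mul_assoc]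
  exact (nonneg_iff_posSemidef.mp (hR.conjugate_nonneg hA)).trace_nonneg

lemma mulVec_eq_zero_of_nonneg_of_le {P X : Matrix n n 𝕜} (hP : 0 ≤ P) (hPX : P ≤ X) {v : n → 𝕜}
    (hv : X *ᵥ v = 0) : P *ᵥ v = 0 := by
  rw [nonneg_iff_posSemidef] at hP
  have hle : 0 ≤ star v ⬝ᵥ (X - P) *ᵥ v := hPX.dotProduct_mulVec_nonneg v
  rw [sub_mulVec, dotProduct_sub, hv, dotProduct_zero, zero_sub, neg_nonneg] at hle
  exact (hP.dotProduct_mulVec_zero_iff v).mp (le_antisymm hle (hP.dotProduct_mulVec_nonneg v))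

lemma mul_eq_zero_of_nonneg_of_le [DecidableEq n] {P X M : Matrix n n 𝕜} (hP : 0 ≤ P)
    (hPX : P ≤ X) (hXM : X * M = 0) : P * M = 0 :=
  ext_of_mulVec_single fun i => by
    have hXv : X *ᵥ (M *ᵥ Pi.single i 1) = 0 := by rw [mulVec_mulVec, hXM, zero_mulVec]
    rw [← mulVec_mulVec, mulVec_eq_zero_of_nonneg_of_le hP hPX hXv, zero_mulVec]

section Factorization

variable [DecidableEq n] {X : Matrix n n 𝕜}

lemma cfc_inv_sqrt_mul_mul_self (hX : 0 ≤ X) :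
    cfc (fun x => (√x)⁻¹) X * X * cfc (fun x => (√x)⁻¹) X = cfc (fun x => √x * (√x)⁻¹) X := by
  have hc (f : ℝ → ℝ) : ContinuousOn f (spectrum ℝ X) := X.finite_real_spectrum.continuousOn f
  calc cfc (fun x => (√x)⁻¹) X * X * cfc (fun x => (√x)⁻¹) X
      = cfc (fun x => (√x)⁻¹ * x * (√x)⁻¹) X := by
        rw [cfc_mul (fun x => (√x)⁻¹ * x) _ X (hc _) (hc _),
          cfc_mul _ (fun x => x) X (hc _) (hc _), cfc_id' ℝ X]
    _ = cfc (fun x => √x * (√x)⁻¹) X := cfc_congr fun x hx => by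
        nth_rewrite 2 [← Real.mul_self_sqrt (spectrum_nonneg_of_nonneg hX hx)]
        rw [← mul_assoc, inv_mul_mul_self]

lemma mul_one_sub_cfc_sqrt_mul_inv_sqrt (hX : 0 ≤ X) :
    X * (1 - cfc (fun x => √x * (√x)⁻¹) X) = 0 := by
  have hc (f : ℝ → ℝ) : ContinuousOn f (spectrum ℝ X) := X.finite_real_spectrum.continuousOn f
  calc X * (1 - cfc (fun x => √x * (√x)⁻¹) X)
      = cfc (fun x => x * (1 - √x * (√x)⁻¹)) X := by
        rw [cfc_mul (fun x => x) (fun x => 1 - √x * (√x)⁻¹) X (hc _) (hc _), cfc_id' ℝ X,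
          cfc_sub (fun _ => 1) (fun x => √x * (√x)⁻¹) X (hc _) (hc _), cfc_const_one ℝ X]
    _ = cfc (fun _ => 0) X := cfc_congr fun x hx => by
        rcases (spectrum_nonneg_of_nonneg hX hx).eq_or_lt with rfl | hx
        · rw [zero_mul]
        · rw [mul_inv_cancel₀ (Real.sqrt_pos.2 hx).ne', sub_self, mul_zero]
    _ = 0 := cfc_const_zero ℝ X

lemma exists_cfc_sqrt_mul_mul_eq (hX : 0 ≤ X) {P : Matrix n n 𝕜} (hP : P ∈ Set.Icc 0 X) :
    ∃ Q ∈ Set.Icc 0 1, cfc Real.sqrt X * Q * cfc Real.sqrt X = P := by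
  have hc (f : ℝ → ℝ) : ContinuousOn f (spectrum ℝ X) := X.finite_real_spectrum.continuousOn f
  set S := cfc Real.sqrt X
  -- `(√0)⁻¹ = 0`, so `T` is the pseudo-inverse of `S` and `E = S T` the projection onto `range X`.
  set T := cfc (fun x => (√x)⁻¹) X
  set E := cfc (fun x => √x * (√x)⁻¹) X
  have hST : S * T = E := (cfc_mul _ _ X (hc _) (hc _)).symm
  have hTS : T * S = E := by
    rw [← cfc_mul _ _ X (hc _) (hc _)]
    exact cfc_congr fun x _ => mul_comm _ _
  have hPE : P * E = P := by
    have := mul_eq_zero_of_nonneg_of_le hP.1 hP.2 (mul_one_sub_cfc_sqrt_mul_inv_sqrt hX)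
    rwa [mul_sub, mul_one, sub_eq_zero, eq_comm] at this
  have hEP : E * P = P := by
    have := congrArg star hPE
    rwa [star_mul, (cfc_predicate _ _ : IsSelfAdjoint E).star_eq, hP.1.isSelfAdjoint.star_eq]
      at this
  have hT : IsSelfAdjoint T := cfc_predicate _ _
  refine ⟨T * P * T, ⟨hT.conjugate_nonneg hP.1, ?_⟩, ?_⟩
  · calc T * P * T ≤ T * X * T := hT.conjugate_le_conjugate hP.2
      _ = E := cfc_inv_sqrt_mul_mul_self hX
      _ ≤ 1 := cfc_le_one _ _ fun x _ => mul_inv_le_one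
  · calc S * (T * P * T) * S = (S * T) * P * (T * S) := by simp only [mul_assoc]
      _ = P := by rw [hST, hTS, hEP, hPE]

lemma image_cfc_sqrt_mul_mul_Icc (hX : 0 ≤ X) :
    (fun Q => cfc Real.sqrt X * Q * cfc Real.sqrt X) '' Set.Icc 0 1 = Set.Icc 0 X := by
  refine Set.Subset.antisymm ?_ fun P hP => exists_cfc_sqrt_mul_mul_eq hX hP
  rintro - ⟨Q, hQ, rfl⟩
  exact cfc_sqrt_mul_mul_mem_Icc hX hQ

end Factorization

section Real

variable [DecidableEq n] {H : Matrix n n ℝ}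

lemma IsHermitian.trace_mul_le_sum_max_eigenvalues_zero (hH : H.IsHermitian) {Q : Matrix n n ℝ}
    (hQ : Q ∈ Set.Icc 0 1) : (Q * H).trace ≤ ∑ i, max (hH.eigenvalues i) 0 := by
  set Hp := cfc (fun x : ℝ => max x 0) H
  set Hm := cfc (fun x : ℝ => max (-x) 0) H
  have hsplit : H = Hp - Hm := by
    rw [← cfc_sub ..]
    conv_lhs => rw [← cfc_id' ℝ H]
    exact cfc_congr fun x _ => (max_zero_sub_max_neg_zero_eq_self x).symm
  have hHp : 0 ≤ Hp := cfc_nonneg fun x _ => le_max_right _ _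
  have hHm : 0 ≤ Hm := cfc_nonneg fun x _ => le_max_right _ _
  calc (Q * H).trace = (Q * Hp).trace - (Q * Hm).trace := by rw [hsplit, mul_sub, trace_sub]
    _ ≤ (Q * Hp).trace := sub_le_self _ (trace_mul_nonneg hQ.1 hHm)
    _ ≤ Hp.trace := by
      have := trace_mul_nonneg (sub_nonneg.2 hQ.2) hHp
      rwa [sub_mul, one_mul, trace_sub, sub_nonneg] at this
    _ = ∑ i, max (hH.eigenvalues i) 0 := hH.trace_cfc _

lemma IsHermitian.exists_trace_mul_eq_sum_max_eigenvalues_zero (hH : H.IsHermitian) :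
    ∃ Q ∈ Set.Icc 0 1, (Q * H).trace = ∑ i, max (hH.eigenvalues i) 0 := by
  have hc (f : ℝ → ℝ) : ContinuousOn f (spectrum ℝ H) := H.finite_real_spectrum.continuousOn f
  refine ⟨cfc (fun x : ℝ => if 0 < x then (1 : ℝ) else 0) H,
    ⟨cfc_nonneg fun x _ => ?_, cfc_le_one _ _ fun x _ => ?_⟩, ?_⟩
  · split_ifs <;> norm_num
  · split_ifs <;> norm_num
  · nth_rewrite 2 [← cfc_id' ℝ H]
    rw [← cfc_mul _ _ H (hc _) (hc _), hH.trace_cfc]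
    refine Finset.sum_congr rfl fun i _ => ?_
    split_ifs with h
    · simp [h.le]
    · simp [not_lt.mp h]

lemma IsHermitian.isGreatest_trace_mul (hH : H.IsHermitian) :
    IsGreatest ((fun Q => (Q * H).trace) '' Set.Icc 0 1) (∑ i, max (hH.eigenvalues i) 0) := by
  refine ⟨hH.exists_trace_mul_eq_sum_max_eigenvalues_zero, ?_⟩
  rintro - ⟨Q, hQ, rfl⟩
  exact hH.trace_mul_le_sum_max_eigenvalues_zero hQ

end Real

end Matrix

theorem stmt14_general {m : ℕ} (B X : Matrix (Fin m) (Fin m) ℝ)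
    (hX : X.PosSemidef)
    (hH : (hX.sqrt * B * hX.sqrt).IsHermitian) :
    IsGreatest {r | ∃ P : Matrix (Fin m) (Fin m) ℝ,
        P.PosSemidef ∧ (X - P).PosSemidef ∧ r = (P * B).trace}
      (∑ i, max (hH.eigenvalues i) 0) := by
  have hset : {r | ∃ P : Matrix (Fin m) (Fin m) ℝ,
      P.PosSemidef ∧ (X - P).PosSemidef ∧ r = (P * B).trace} =
      (fun P => (P * B).trace) '' Set.Icc 0 X := by
    ext r
    refine exists_congr fun P => ?_
    rw [Set.mem_Icc, nonneg_iff_posSemidef, le_iff, eq_comm, and_assoc]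
  have htrace (Q : Matrix (Fin m) (Fin m) ℝ) :
      (hX.sqrt * Q * hX.sqrt * B).trace = (Q * (hX.sqrt * B * hX.sqrt)).trace := by
    rw [show hX.sqrt * Q * hX.sqrt * B = hX.sqrt * (Q * hX.sqrt * B) by simp only [mul_assoc],
      trace_mul_comm]
    simp only [mul_assoc]
  rw [hset, ← image_cfc_sqrt_mul_mul_Icc (nonneg_iff_posSemidef.mpr hX), ← hX.sqrt_eq_cfc,
    Set.image_image]
  simp only [htrace]
  exact hH.isGreatest_trace_mul

/-- for `B` symmetric and `X ⪰ 0`,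
`max {⟨P, B⟩ : 0 ⪯ P ⪯ X} = Tr((X^{1/2} B X^{1/2})₊)`, the sum of the positive
eigenvalues of `X^{1/2} B X^{1/2}`. -/
theorem stmt14 {m : ℕ} (B X : Matrix (Fin m) (Fin m) ℝ)
    (hB : B.IsSymm) (hX : X.PosSemidef)
    (hH : (hX.sqrt * B * hX.sqrt).IsHermitian) :
    IsGreatest {r | ∃ P : Matrix (Fin m) (Fin m) ℝ,
        P.PosSemidef ∧ (X - P).PosSemidef ∧ r = (P * B).trace}
      (∑ i, max (hH.eigenvalues i) 0) :=
  stmt14_general B X hX hH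
end

section
/- Let a ∈ ℝᵐ, ρ > 0 with ‖a‖₂² > ρ, X ⪰ 0 an m×m matrix with Tr X = 1 and aᵀXa > ρ, and set B(X) = X^{1/2}(aaᵀ − ρI)X^{1/2}. Then B(X) has exactly one positive eigenvalue α, and α ≤ aᵀXa. Moreover the sum of the absolute values of the negative eigenvalues of B(X) equals α − (aᵀXa − ρ), which is at most ρ. -/
open Matrix
open scoped BigOperators
open scoped MatrixOrder

/-!
With `b = X^{1/2} a`, symmetry of `X^{1/2}` gives `B(X) = b bᵀ - ρ X ⪯ b bᵀ`. A Hermitian matrix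
dominated by the rank-one matrix `b bᵀ` has at most one positive eigenvalue, since its quadratic
form is nonpositive on `b^⊥`, and every eigenvalue is at most `(b ⬝ᵥ u)² ≤ b ⬝ᵥ b = aᵀXa` for a
unit eigenvector `u`. The trace `aᵀXa - ρ` is positive, so a positive eigenvalue `α` exists, and
the remaining eigenvalues sum to `aᵀXa - ρ - α`.
-/

namespace Matrix

variable {n : Type*} [Fintype n]

lemma dotProduct_mulVec_le_sq_of_le_vecMulVec {A : Matrix n n ℝ} {b : n → ℝ}
    (h : A ≤ vecMulVec b b) (v : n → ℝ) : v ⬝ᵥ A *ᵥ v ≤ (b ⬝ᵥ v) ^ 2 := by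
  have := (le_iff.mp h).dotProduct_mulVec_nonneg v
  simp only [star_trivial, sub_mulVec, dotProduct_sub, vecMulVec_mulVec] at this
  have hb : v ⬝ᵥ (MulOpposite.op (b ⬝ᵥ v) • b) = (b ⬝ᵥ v) ^ 2 := by
    simp [dotProduct_comm, sq]
  linarith

lemma IsSymm.mul_vecMulVec_mul {R : Type*} [CommSemiring R] {S : Matrix n n R} (hS : S.IsSymm)
    (a : n → R) : S * vecMulVec a a * S = vecMulVec (S *ᵥ a) (S *ᵥ a) := by
  rw [mul_vecMulVec, vecMulVec_mul, ← mulVec_transpose, hS.eq]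

section Sqrt

variable [DecidableEq n]

lemma isSymm_sqrt (X : Matrix n n ℝ) : (CFC.sqrt X).IsSymm :=
  (conjTranspose_eq_transpose_of_trivial _).symm.trans
    (nonneg_iff_posSemidef.mp (CFC.sqrt_nonneg X)).isHermitian.eq

lemma sqrt_mulVec_dotProduct_sqrt_mulVec {X : Matrix n n ℝ} (hX : X.PosSemidef) (a : n → ℝ) :
    CFC.sqrt X *ᵥ a ⬝ᵥ CFC.sqrt X *ᵥ a = a ⬝ᵥ X *ᵥ a := by
  rw [dotProduct_mulVec, ← mulVec_transpose, (isSymm_sqrt X).eq, mulVec_mulVec,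
    CFC.sqrt_mul_sqrt_self X hX.nonneg, dotProduct_comm]

lemma sqrt_mul_vecMulVec_sub_smul_one_mul_sqrt {X : Matrix n n ℝ}
    (hX : X.PosSemidef) (a : n → ℝ) (ρ : ℝ) :
    CFC.sqrt X * (vecMulVec a a - ρ • 1) * CFC.sqrt X =
      vecMulVec (CFC.sqrt X *ᵥ a) (CFC.sqrt X *ᵥ a) - ρ • X := by
  rw [mul_sub, sub_mul, (isSymm_sqrt X).mul_vecMulVec_mul, Matrix.mul_smul, mul_one,
    Matrix.smul_mul, CFC.sqrt_mul_sqrt_self X hX.nonneg]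

end Sqrt

namespace IsHermitian

variable [DecidableEq n] {A : Matrix n n ℝ} (hA : A.IsHermitian)

lemma dotProduct_eigenvectorBasis (i j : n) :
    ⇑(hA.eigenvectorBasis i) ⬝ᵥ ⇑(hA.eigenvectorBasis j) = if i = j then 1 else 0 := by
  have h := orthonormal_iff_ite.mp hA.eigenvectorBasis.orthonormal i j
  rwa [EuclideanSpace.inner_eq_star_dotProduct, star_trivial, dotProduct_comm] at h

lemma dotProduct_mulVec_eigenvectorBasis_add {i j : n} (hij : i ≠ j) (c d : ℝ) :
    (c • ⇑(hA.eigenvectorBasis i) + d • ⇑(hA.eigenvectorBasis j)) ⬝ᵥ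
        A *ᵥ (c • ⇑(hA.eigenvectorBasis i) + d • ⇑(hA.eigenvectorBasis j)) =
      c ^ 2 * hA.eigenvalues i + d ^ 2 * hA.eigenvalues j := by
  simp only [mulVec_add, mulVec_smul, mulVec_eigenvectorBasis, dotProduct_add, add_dotProduct,
    dotProduct_smul, smul_dotProduct, dotProduct_eigenvectorBasis, if_neg hij, if_neg hij.symm,
    ↓reduceIte, smul_eq_mul]
  ring

variable {b : n → ℝ} (h : A ≤ vecMulVec b b)
include h

lemma eigenvalues_le_sq_dotProduct_eigenvectorBasis (i : n) :
    hA.eigenvalues i ≤ (b ⬝ᵥ ⇑(hA.eigenvectorBasis i)) ^ 2 := by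
  rw [hA.eigenvalues_eq, star_trivial, RCLike.re_to_real]
  exact dotProduct_mulVec_le_sq_of_le_vecMulVec h _

lemma eigenvalues_le_dotProduct_self (i : n) : hA.eigenvalues i ≤ b ⬝ᵥ b := by
  have hCS : (b ⬝ᵥ ⇑(hA.eigenvectorBasis i)) ^ 2 ≤
      (b ⬝ᵥ b) * (⇑(hA.eigenvectorBasis i) ⬝ᵥ ⇑(hA.eigenvectorBasis i)) := by
    simpa only [dotProduct, sq] using
      Finset.sum_mul_sq_le_sq_mul_sq Finset.univ b ⇑(hA.eigenvectorBasis i)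
  rw [hA.dotProduct_eigenvectorBasis, if_pos rfl, mul_one] at hCS
  exact (hA.eigenvalues_le_sq_dotProduct_eigenvectorBasis h i).trans hCS

lemma eigenvalues_nonpos_or_nonpos_of_le_vecMulVec {i j : n} (hij : i ≠ j) :
    hA.eigenvalues i ≤ 0 ∨ hA.eigenvalues j ≤ 0 := by
  by_contra! hpos
  set c := b ⬝ᵥ ⇑(hA.eigenvectorBasis j)
  set d := b ⬝ᵥ ⇑(hA.eigenvectorBasis i)
  have hd : 0 < d ^ 2 := hpos.1.trans_le (hA.eigenvalues_le_sq_dotProduct_eigenvectorBasis h i)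
  -- `c • uᵢ - d • uⱼ` is orthogonal to `b`, so `A` is nonpositive on it
  have hle := dotProduct_mulVec_le_sq_of_le_vecMulVec h
    (c • ⇑(hA.eigenvectorBasis i) + (-d) • ⇑(hA.eigenvectorBasis j))
  rw [hA.dotProduct_mulVec_eigenvectorBasis_add hij, dotProduct_add, dotProduct_smul,
    dotProduct_smul, smul_eq_mul, smul_eq_mul] at hle
  nlinarith [mul_nonneg (sq_nonneg c) hpos.1.le, mul_pos hd hpos.2]

theorem exists_single_pos_eigenvalue_of_le_vecMulVec (htr : 0 < A.trace) :
    ∃ i₀, 0 < hA.eigenvalues i₀ ∧ (∀ j, j ≠ i₀ → hA.eigenvalues j ≤ 0) ∧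
      hA.eigenvalues i₀ ≤ b ⬝ᵥ b ∧
      ∑ j ∈ Finset.univ.erase i₀, |hA.eigenvalues j| = hA.eigenvalues i₀ - A.trace := by
  simp only [hA.trace_eq_sum_eigenvalues, RCLike.ofReal_real_eq_id, id] at htr ⊢
  obtain ⟨i₀, hi₀⟩ : ∃ i₀, 0 < hA.eigenvalues i₀ := by
    by_contra! h
    exact htr.not_ge (Finset.sum_nonpos fun i _ => h i)
  have hneg : ∀ j, j ≠ i₀ → hA.eigenvalues j ≤ 0 := fun j hj =>
    (hA.eigenvalues_nonpos_or_nonpos_of_le_vecMulVec h hj).resolve_right hi₀.not_ge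
  refine ⟨i₀, hi₀, hneg, hA.eigenvalues_le_dotProduct_self h i₀, ?_⟩
  rw [← Finset.add_sum_erase _ _ (Finset.mem_univ i₀), sub_add_cancel_left,
    ← Finset.sum_neg_distrib]
  exact Finset.sum_congr rfl fun j hj => abs_of_nonpos (hneg j (Finset.ne_of_mem_erase hj))

end IsHermitian

end Matrix

theorem stmt15_general {m : ℕ} (a : Fin m → ℝ) (ρ : ℝ) (hρ0 : 0 < ρ)
    (X : Matrix (Fin m) (Fin m) ℝ) (hX : X.PosSemidef) (htr : X.trace = 1)
    (haXa : ρ < a ⬝ᵥ X.mulVec a)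
    (hH : (CFC.sqrt X * (vecMulVec a a - ρ • (1 : Matrix (Fin m) (Fin m) ℝ)) *
      CFC.sqrt X).IsHermitian) :
    ∃ i₀ : Fin m, 0 < hH.eigenvalues i₀ ∧ (∀ j, j ≠ i₀ → hH.eigenvalues j ≤ 0) ∧
      hH.eigenvalues i₀ ≤ a ⬝ᵥ X.mulVec a ∧
      (∑ j ∈ Finset.univ.erase i₀, |hH.eigenvalues j|) =
        hH.eigenvalues i₀ - (a ⬝ᵥ X.mulVec a - ρ) ∧
      hH.eigenvalues i₀ - (a ⬝ᵥ X.mulVec a - ρ) ≤ ρ := by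
  have hB := sqrt_mul_vecMulVec_sub_smul_one_mul_sqrt hX a ρ
  have hb := sqrt_mulVec_dotProduct_sqrt_mulVec hX a
  have hle : CFC.sqrt X * (vecMulVec a a - ρ • 1) * CFC.sqrt X ≤
      vecMulVec (CFC.sqrt X *ᵥ a) (CFC.sqrt X *ᵥ a) := by
    rw [hB, le_iff, sub_sub_cancel]
    exact hX.smul hρ0.le
  have htrB : (CFC.sqrt X * (vecMulVec a a - ρ • 1) * CFC.sqrt X).trace = a ⬝ᵥ X *ᵥ a - ρ := by
    rw [hB, trace_sub, trace_vecMulVec, trace_smul, htr, hb, smul_eq_mul, mul_one]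
  obtain ⟨i₀, hpos, hneg, hα, hsum⟩ :=
    hH.exists_single_pos_eigenvalue_of_le_vecMulVec hle (htrB ▸ sub_pos.mpr haXa)
  rw [hb] at hα
  rw [htrB] at hsum
  exact ⟨i₀, hpos, hneg, hα, hsum, by linarith⟩

/-- for `a ∈ ℝᵐ`, `0 < ρ < ‖a‖₂²`, `X ⪰ 0` with `Tr X = 1` and
`aᵀXa > ρ`, the matrix `B(X) = X^{1/2}(aaᵀ − ρI)X^{1/2}` has exactly one positive
eigenvalue `α`, with `α ≤ aᵀXa`, and the sum of the absolute values of its negative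
eigenvalues equals `α − (aᵀXa − ρ)`, which is at most `ρ`. -/
theorem stmt15 {m : ℕ} (a : Fin m → ℝ) (ρ : ℝ) (hρ0 : 0 < ρ)
    (hρ1 : ρ < ∑ j, a j ^ 2)
    (X : Matrix (Fin m) (Fin m) ℝ) (hX : X.PosSemidef) (htr : X.trace = 1)
    (haXa : ρ < a ⬝ᵥ X.mulVec a)
    (hH : (CFC.sqrt X * (vecMulVec a a - ρ • (1 : Matrix (Fin m) (Fin m) ℝ)) *
      CFC.sqrt X).IsHermitian) :
    ∃ i₀ : Fin m, 0 < hH.eigenvalues i₀ ∧ (∀ j, j ≠ i₀ → hH.eigenvalues j ≤ 0) ∧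
      hH.eigenvalues i₀ ≤ a ⬝ᵥ X.mulVec a ∧
      (∑ j ∈ Finset.univ.erase i₀, |hH.eigenvalues j|) =
        hH.eigenvalues i₀ - (a ⬝ᵥ X.mulVec a - ρ) ∧
      hH.eigenvalues i₀ - (a ⬝ᵥ X.mulVec a - ρ) ≤ ρ :=
  stmt15_general a ρ hρ0 X hX htr haXa hH
end
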